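/- Let t be a closed densely defined operator on a Hilbert space E with bounded transform F_t = t(1 + t*t)^{-1/2}. Then Ran(1 - F_t* F_t) is dense in E. -/

import Mathlib

/-!
Since `Q² = (1 + t*t)⁻¹`, for all `u, v` we get
`⟪F (Q u), F v⟫ = ⟪t (Q² u), t (Q v)⟫ = ⟪t*t Q² u, Q v⟫ = ⟪Q u - Q³ u, v⟫`,
i.e. `(1 - F*F) Q = Q³`. So `Ran(1 - F*F)` contains `Ran Q³`, which is dense because `Q³` is
self-adjoint and injective (`Q` is injective as `Q²` has a left inverse).
-/

open ContinuousLinearMap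

theorem IsSelfAdjoint.denseRange_of_injective {𝕜 E : Type*} [RCLike 𝕜] [NormedAddCommGroup E]
    [InnerProductSpace 𝕜 E] [CompleteSpace E] {T : E →L[𝕜] E} (hT : IsSelfAdjoint T)
    (hinj : Function.Injective T) : DenseRange T := by
  change Dense (T.range : Set E)
  rw [Submodule.dense_iff_topologicalClosure_eq_top, Submodule.topologicalClosure_eq_top_iff,
    T.orthogonal_range, hT.adjoint_eq]
  exact LinearMap.ker_eq_bot.mpr hinj

section BoundedTransform

variable {E : Type*} [NormedAddCommGroup E] [InnerProductSpace ℂ E] [CompleteSpace E]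
  {t : E →ₗ.[ℂ] E} {Q : E →L[ℂ] E}

theorem injective_of_sq_add_adjoint_comp_eq_id
    (hQsq : ∀ x : E, ∃ h1 : Q (Q x) ∈ t.domain,
      ∃ h2 : t ⟨Q (Q x), h1⟩ ∈ t.adjoint.domain,
        Q (Q x) + t.adjoint ⟨t ⟨Q (Q x), h1⟩, h2⟩ = x) :
    Function.Injective Q := by
  refine (injective_iff_map_eq_zero Q).mpr fun z hz => ?_
  obtain ⟨_, _, hinv⟩ := hQsq z
  simpa [hz, ← ZeroMemClass.zero_def] using hinv.symm

theorem one_sub_adjoint_comp_boundedTransform_comp_eq_pow_three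
    (hdense : Dense (t.domain : Set E)) (hQ : IsSelfAdjoint Q)
    (hQdom : ∀ x : E, Q x ∈ t.domain)
    (hQsq : ∀ x : E, ∃ h1 : Q (Q x) ∈ t.domain,
      ∃ h2 : t ⟨Q (Q x), h1⟩ ∈ t.adjoint.domain,
        Q (Q x) + t.adjoint ⟨t ⟨Q (Q x), h1⟩, h2⟩ = x)
    {F : E →L[ℂ] E} (hF : ∀ x : E, F x = t ⟨Q x, hQdom x⟩) :
    (1 - adjoint F ∘L F) ∘L Q = Q ^ 3 := by
  ext u
  obtain ⟨h1, h2, hinv⟩ := hQsq u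
  suffices adjoint F (F (Q u)) = Q u - Q (Q (Q u)) by simp [this, pow_succ]
  refine ext_inner_right ℂ fun v => ?_
  calc inner ℂ (adjoint F (F (Q u))) v
      = inner ℂ (t ⟨Q (Q u), h1⟩) (t ⟨Q v, hQdom v⟩) := by
        rw [adjoint_inner_left, hF, hF]
    _ = inner ℂ (t.adjoint ⟨t ⟨Q (Q u), h1⟩, h2⟩) (Q v) :=
        (t.adjoint_isFormalAdjoint hdense ⟨_, h2⟩ ⟨Q v, hQdom v⟩).symm
    _ = inner ℂ (Q u - Q (Q (Q u))) v := by
        rw [eq_sub_of_add_eq' hinv, ← map_sub]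
        exact (hQ.isSymmetric _ v).symm

end BoundedTransform

theorem range_one_sub_adjoint_comp_boundedTransform_dense_general
    {E : Type*} [NormedAddCommGroup E] [InnerProductSpace ℂ E] [CompleteSpace E]
    (t : E →ₗ.[ℂ] E) (hdense : Dense (t.domain : Set E))
    (Q : E →L[ℂ] E) (hQpos : Q.IsPositive)
    (hQdom : ∀ x : E, Q x ∈ t.domain)
    (hQsq : ∀ x : E, ∃ h1 : Q (Q x) ∈ t.domain,
      ∃ h2 : t ⟨Q (Q x), h1⟩ ∈ t.adjoint.domain,
        Q (Q x) + t.adjoint ⟨t ⟨Q (Q x), h1⟩, h2⟩ = x)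
    (F : E →L[ℂ] E) (hF : ∀ x : E, F x = t ⟨Q x, hQdom x⟩) :
    DenseRange ⇑(1 - ContinuousLinearMap.adjoint F ∘L F) := by
  have hQ3 : DenseRange ⇑(Q ^ 3) := by
    refine (hQpos.isSelfAdjoint.pow 3).denseRange_of_injective ?_
    have hQinj := injective_of_sq_add_adjoint_comp_eq_id hQsq
    simpa [pow_succ] using (hQinj.comp hQinj).comp hQinj
  rw [← one_sub_adjoint_comp_boundedTransform_comp_eq_pow_three hdense hQpos.isSelfAdjoint
    hQdom hQsq hF, coe_comp] at hQ3
  exact hQ3.of_comp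

/-- For a closed densely defined operator `t` on a Hilbert space `E` with
bounded transform `F = t(1+t*t)^{-1/2}`, the range of `1 - F*F` is dense in `E`.
Here `Q` is the positive bounded operator representing `(1+t*t)^{-1/2}`. -/
theorem range_one_sub_adjoint_comp_boundedTransform_dense
    {E : Type*} [NormedAddCommGroup E] [InnerProductSpace ℂ E] [CompleteSpace E]
    (t : E →ₗ.[ℂ] E) (hdense : Dense (t.domain : Set E)) (hclosed : t.IsClosed)
    (Q : E →L[ℂ] E) (hQpos : Q.IsPositive)
    (hQdom : ∀ x : E, Q x ∈ t.domain)
    (hQsq : ∀ x : E, ∃ h1 : Q (Q x) ∈ t.domain,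
      ∃ h2 : t ⟨Q (Q x), h1⟩ ∈ t.adjoint.domain,
        Q (Q x) + t.adjoint ⟨t ⟨Q (Q x), h1⟩, h2⟩ = x)
    (F : E →L[ℂ] E) (hF : ∀ x : E, F x = t ⟨Q x, hQdom x⟩) :
    DenseRange ⇑(1 - ContinuousLinearMap.adjoint F ∘L F) :=
  range_one_sub_adjoint_comp_boundedTransform_dense_general t hdense Q hQpos hQdom hQsq F hF
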